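/- The swap vertices of the Grigorchuk generator b are exactly the words 1^k 0 (k ones followed by a zero) with k ≡ 0 or 1 (mod 3): a binary word v satisfies b(v) = v and b(v·0) = v·1 if and only if v = 1^k 0 for some k ≥ 0 with k ≡ 0 or 1 (mod 3). -/
import Mathlib


/-- The Grigorchuk generator `a`: flips the first bit of a nonempty binary word. -/
def grigA : List Bool → List Bool
  | [] => []
  | false :: w => true :: w
  | true :: w => false :: w

mutual
  /-- The Grigorchuk generator `b`. -/
  def grigB : List Bool → List Bool
    | [] => []
    | false :: w => false :: grigA w
    | true :: w => true :: grigC w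
  /-- The Grigorchuk generator `c`. -/
  def grigC : List Bool → List Bool
    | [] => []
    | false :: w => false :: grigA w
    | true :: w => true :: grigD w
  /-- The Grigorchuk generator `d`. -/
  def grigD : List Bool → List Bool
    | [] => []
    | false :: w => false :: w
    | true :: w => true :: grigB w
end

theorem grigA_involutive : Function.Involutive grigA := by
  intro w
  match w with
  | [] => rfl
  | false :: w => rfl
  | true :: w => rfl

theorem grigBCD_involutive : ∀ w : List Bool,
    grigB (grigB w) = w ∧ grigC (grigC w) = w ∧ grigD (grigD w) = w
  | [] => ⟨rfl, rfl, rfl⟩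
  | false :: w => by
      simp [grigB, grigC, grigD, grigA_involutive w]
  | true :: w => by
      obtain ⟨hb, hc, hd⟩ := grigBCD_involutive w
      simp [grigB, grigC, grigD, hb, hc, hd]

theorem grigB_involutive : Function.Involutive grigB :=
  fun w => (grigBCD_involutive w).1

theorem grigC_involutive : Function.Involutive grigC :=
  fun w => (grigBCD_involutive w).2.1

theorem grigD_involutive : Function.Involutive grigD :=
  fun w => (grigBCD_involutive w).2.2


lemma grigA_fix {w : List Bool} (h : grigA w = w) : w = [] := by
  cases w with
  | nil => rfl
  | cons b t => cases b <;> simp [grigA] at h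

lemma repl_false (k : ℕ) (w : List Bool) :
    (false :: w = List.replicate k true ++ [false]) ↔ (k = 0 ∧ w = []) := by
  cases k with
  | zero => simp [eq_comm]
  | succ j => simp [List.replicate_succ]

lemma repl_true (k : ℕ) (w : List Bool) :
    (true :: w = List.replicate k true ++ [false]) ↔
      ∃ j, k = j + 1 ∧ w = List.replicate j true ++ [false] := by
  cases k with
  | zero => simp
  | succ j =>
      simp only [List.replicate_succ, List.cons_append, List.cons.injEq, true_and]
      constructor
      · intro h; exact ⟨j, rfl, h⟩
      · rintro ⟨j', hj, hw⟩
        obtain rfl : j = j' := by omega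
        exact hw


lemma mod3_b1 {k : ℕ} (h : k % 3 = 0 ∨ k % 3 = 2) : (k+1) % 3 = 0 ∨ (k+1) % 3 = 1 := by omega
lemma mod3_b2 {j : ℕ} (h : (j+1) % 3 = 0 ∨ (j+1) % 3 = 1) : j % 3 = 0 ∨ j % 3 = 2 := by omega
lemma mod3_c1 {k : ℕ} (h : k % 3 = 1 ∨ k % 3 = 2) : (k+1) % 3 = 0 ∨ (k+1) % 3 = 2 := by omega
lemma mod3_c2 {j : ℕ} (h : (j+1) % 3 = 0 ∨ (j+1) % 3 = 2) : j % 3 = 1 ∨ j % 3 = 2 := by omega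
lemma mod3_d1 {k : ℕ} (h : k % 3 = 0 ∨ k % 3 = 1) : (k+1) % 3 = 1 ∨ (k+1) % 3 = 2 := by omega
lemma mod3_d2 {j : ℕ} (h : (j+1) % 3 = 1 ∨ (j+1) % 3 = 2) : j % 3 = 0 ∨ j % 3 = 1 := by omega
lemma mod3_zero (h : (0:ℕ) % 3 = 1 ∨ (0:ℕ) % 3 = 2) : False := by omega

lemma grig_swap_all : ∀ v : List Bool,
    ((grigB v = v ∧ grigB (v ++ [false]) = v ++ [true]) ↔
      ∃ k : ℕ, (k % 3 = 0 ∨ k % 3 = 1) ∧ v = List.replicate k true ++ [false]) ∧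
    ((grigC v = v ∧ grigC (v ++ [false]) = v ++ [true]) ↔
      ∃ k : ℕ, (k % 3 = 0 ∨ k % 3 = 2) ∧ v = List.replicate k true ++ [false]) ∧
    ((grigD v = v ∧ grigD (v ++ [false]) = v ++ [true]) ↔
      ∃ k : ℕ, (k % 3 = 1 ∨ k % 3 = 2) ∧ v = List.replicate k true ++ [false])
  | [] => by
      refine ⟨?_, ?_, ?_⟩ <;>
      · constructor
        · rintro ⟨-, h⟩; simp [grigB, grigC, grigD, grigA] at h
        · rintro ⟨k, -, h⟩
          exact absurd h.symm (by simp)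
  | false :: w => by
      have hswap : grigA (w ++ [false]) = w ++ [true] → grigA w = w → w = [] :=
        fun _ h => grigA_fix h
      refine ⟨?_, ?_, ?_⟩
      · constructor
        · rintro ⟨h1, h2⟩
          simp only [grigB, List.cons.injEq, true_and] at h1
          refine ⟨0, Or.inl rfl, ?_⟩
          simp [grigA_fix h1]
        · rintro ⟨k, -, h⟩
          rw [repl_false] at h
          obtain ⟨rfl, rfl⟩ := h
          exact ⟨rfl, rfl⟩
      · constructor
        · rintro ⟨h1, h2⟩
          simp only [grigC, List.cons.injEq, true_and] at h1
          refine ⟨0, Or.inl rfl, ?_⟩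
          simp [grigA_fix h1]
        · rintro ⟨k, -, h⟩
          rw [repl_false] at h
          obtain ⟨rfl, rfl⟩ := h
          exact ⟨rfl, rfl⟩
      · constructor
        · rintro ⟨-, h2⟩
          simp [grigD] at h2
        · rintro ⟨k, hk, h⟩
          rw [repl_false] at h
          obtain ⟨rfl, rfl⟩ := h
          exact absurd hk mod3_zero
  | true :: w => by
      obtain ⟨ihb, ihc, ihd⟩ := grig_swap_all w
      have eb : ∀ u, grigB (true :: u) = true :: grigC u := fun u => rfl
      have ec : ∀ u, grigC (true :: u) = true :: grigD u := fun u => rfl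
      have ed : ∀ u, grigD (true :: u) = true :: grigB u := fun u => rfl
      refine ⟨?_, ?_, ?_⟩
      · rw [show (true :: w) ++ [false] = true :: (w ++ [false]) from rfl,
          eb, eb]
        simp only [List.cons.injEq, true_and, List.cons_append]
        rw [ihc]
        constructor
        · rintro ⟨k, hk, rfl⟩
          exact ⟨k + 1, mod3_b1 hk, by simp [List.replicate_succ]⟩
        · rintro ⟨k, hk, h⟩
          rw [repl_true] at h
          obtain ⟨j, rfl, rfl⟩ := h
          exact ⟨j, mod3_b2 hk, rfl⟩
      · rw [show (true :: w) ++ [false] = true :: (w ++ [false]) from rfl,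
          ec, ec]
        simp only [List.cons.injEq, true_and, List.cons_append]
        rw [ihd]
        constructor
        · rintro ⟨k, hk, rfl⟩
          exact ⟨k + 1, mod3_c1 hk, by simp [List.replicate_succ]⟩
        · rintro ⟨k, hk, h⟩
          rw [repl_true] at h
          obtain ⟨j, rfl, rfl⟩ := h
          exact ⟨j, mod3_c2 hk, rfl⟩
      · rw [show (true :: w) ++ [false] = true :: (w ++ [false]) from rfl,
          ed, ed]
        simp only [List.cons.injEq, true_and, List.cons_append]
        rw [ihb]
        constructor
        · rintro ⟨k, hk, rfl⟩
          exact ⟨k + 1, mod3_d1 hk, by simp [List.replicate_succ]⟩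
        · rintro ⟨k, hk, h⟩
          rw [repl_true] at h
          obtain ⟨j, rfl, rfl⟩ := h
          exact ⟨j, mod3_d2 hk, rfl⟩

/-- The swap vertices of the Grigorchuk generator `b` are exactly the words
`1^k 0` with `k ≡ 0` or `1 (mod 3)`. -/
theorem grigB_swap_vertices :
    ∀ v : List Bool,
      (grigB v = v ∧ grigB (v ++ [false]) = v ++ [true]) ↔
        ∃ k : ℕ, (k % 3 = 0 ∨ k % 3 = 1) ∧ v = List.replicate k true ++ [false] :=
  fun v => (grig_swap_all v).1
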